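/- For any L > 0 and each B ∈ [B₂, B̄), there exists a unique A*(B) ∈ (A̲(B), Ā(B)] such that Λ₂(A*(B), B) = L. -/

import Mathlib

/-!
Write `g_{A,B} = A + g_{0,B}`. Since `g_{A,B}' = λ e^{-λ(x-a)} F₁(B,x)`, the function `g_{A,B}`
rises strictly between the critical points `x₁(B) < a < x₂(B)` and falls strictly after `x₂(B)`.
So to the right of `x₁(B)` the superlevel set `{g_{A,B} ≥ ℓ}` is exactly `[U(A,B), u(A,B)]`, and
it grows with `A`. Consequently `Λ₂(·,B)` is strictly increasing on `(A̲(B), Ā(B)]`, and it is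
continuous because it equals the integral of `(g_{A,B} - ℓ)⁺` over the fixed interval
`[U(Ā(B),B), u(Ā(B),B)]`; that integral vanishes at `A = A̲(B)`, where the peak value of `g` is `ℓ`.

An envelope argument (comparing `g_{0,B'}` with `g_{0,B}` at the critical points of the latter)
shows that `g̃` is strictly increasing, hence `A̲(B) < Ā(B)` for `B > B₁`, and that for `B ≥ B₂`
the function `g_{Ā(B),B}` dominates `g_{Ā(B₂),B₂}` to the right of `x₁(B₂)`, hence
`Λ₂(Ā(B),B) ≥ L`. The intermediate value theorem then produces `A*(B)`, unique by monotonicity.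
-/

open MeasureTheory Set Filter Topology

noncomputable def gfun (μ σ a : ℝ) (h : ℝ → ℝ) (A B x : ℝ) : ℝ :=
  A - B * Real.exp (-(2 * μ / σ ^ 2) * (x - a)) -
    (2 * μ / σ ^ 2) / μ * ∫ y in a..x, h y * Real.exp (-(2 * μ / σ ^ 2) * (x - y))

noncomputable def F1 (μ σ a : ℝ) (h : ℝ → ℝ) (B x : ℝ) : ℝ :=
  B - 1 / μ * ∫ y in a..x, deriv h y * Real.exp ((2 * μ / σ ^ 2) * (y - a))

noncomputable def Bbar (μ σ a : ℝ) (h : ℝ → ℝ) : ℝ :=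
  -(1 / μ) * ∫ y in Set.Iic a, deriv h y * Real.exp ((2 * μ / σ ^ 2) * (y - a))

open Real

theorem intervalIntegral.integral_eq_integral_max_zero {φ : ℝ → ℝ} {c U u d : ℝ}
    (hφ : Continuous φ) (hcU : c ≤ U) (hUu : U ≤ u) (hud : u ≤ d)
    (hleft : ∀ x ∈ Icc c U, φ x ≤ 0) (hmid : ∀ x ∈ Icc U u, 0 ≤ φ x)
    (hright : ∀ x ∈ Icc u d, φ x ≤ 0) :
    ∫ x in U..u, φ x = ∫ x in c..d, max (φ x) 0 := by
  have hi : ∀ s t, IntervalIntegrable (fun x => max (φ x) 0) volume s t :=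
    fun s t => (hφ.max continuous_const).intervalIntegrable s t
  have zero_of_nonpos : ∀ {s t}, s ≤ t → (∀ x ∈ Icc s t, φ x ≤ 0) →
      ∫ x in s..t, max (φ x) 0 = 0 := fun hst hneg => by
    rw [intervalIntegral.integral_congr (g := fun _ => (0 : ℝ)) fun x hx =>
      max_eq_right (hneg x (uIcc_of_le hst ▸ hx)), intervalIntegral.integral_zero]
  have hmid' : ∫ x in U..u, max (φ x) 0 = ∫ x in U..u, φ x :=
    intervalIntegral.integral_congr fun x hx => max_eq_left (hmid x (uIcc_of_le hUu ▸ hx))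
  rw [← intervalIntegral.integral_add_adjacent_intervals (hi c U) (hi U d),
    ← intervalIntegral.integral_add_adjacent_intervals (hi U u) (hi u d),
    zero_of_nonpos hcU hleft, zero_of_nonpos hud hright, hmid']
  ring

structure RisesThenFalls (f : ℝ → ℝ) (p₁ p₂ : ℝ) : Prop where
  strictMonoOn : StrictMonoOn f (Icc p₁ p₂)
  strictAntiOn : StrictAntiOn f (Ici p₂)

namespace RisesThenFalls

variable {f : ℝ → ℝ} {p₁ p₂ U u U' u' ℓ x : ℝ}

theorem apply_le_apply_right (hf : RisesThenFalls f p₁ p₂) (hx : p₁ ≤ x) : f x ≤ f p₂ := by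
  rcases le_total x p₂ with hxp | hxp
  · exact hf.strictMonoOn.monotoneOn ⟨hx, hxp⟩ ⟨hx.trans hxp, le_rfl⟩ hxp
  · exact hf.strictAntiOn.antitoneOn (le_refl p₂) hxp hxp

theorem le_apply_iff (hf : RisesThenFalls f p₁ p₂) (hU : U ∈ Icc p₁ p₂) (hu : p₂ ≤ u)
    (hfU : f U = ℓ) (hfu : f u = ℓ) (hx : p₁ ≤ x) : ℓ ≤ f x ↔ x ∈ Icc U u := by
  rcases le_total x p₂ with hxp | hxp
  · rw [← hfU, hf.strictMonoOn.le_iff_le hU ⟨hx, hxp⟩]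
    exact ⟨fun hUx => ⟨hUx, hxp.trans hu⟩, And.left⟩
  · rw [← hfu, hf.strictAntiOn.le_iff_ge (show u ∈ Ici p₂ from hu) hxp]
    exact ⟨fun hxu => ⟨hU.2.trans hxp, hxu⟩, And.right⟩

theorem integral_sub_le (hf : RisesThenFalls f p₁ p₂) (hfc : Continuous f) (hU : U ∈ Icc p₁ p₂)
    (hu : p₂ ≤ u) (hfU : f U = ℓ) (hfu : f u = ℓ) (hU' : p₁ ≤ U') (hU'u' : U' ≤ u')
    (hℓ : ∀ x ∈ Icc U' u', ℓ ≤ f x) :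
    ∫ x in U'..u', (f x - ℓ) ≤ ∫ x in U..u, (f x - ℓ) := by
  have hsub : ∀ x ∈ Icc U' u', x ∈ Icc U u := fun x hx =>
    (hf.le_apply_iff hU hu hfU hfu (hU'.trans hx.1)).1 (hℓ x hx)
  refine intervalIntegral.integral_mono_interval (hsub U' ⟨le_rfl, hU'u'⟩).1 hU'u'
    (hsub u' ⟨hU'u', le_rfl⟩).2 ?_ ((hfc.sub continuous_const).intervalIntegrable _ _)
  refine ae_restrict_of_forall_mem measurableSet_Ioc fun x hx => ?_
  exact sub_nonneg.2
    ((hf.le_apply_iff hU hu hfU hfu (hU.1.trans hx.1.le)).2 (Ioc_subset_Icc_self hx))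

end RisesThenFalls

structure LevelCrossings (g : ℝ → ℝ → ℝ) (p₁ p₂ ℓ A₀ A₁ : ℝ) (U u : ℝ → ℝ) : Prop where
  continuous : ∀ A, Continuous (g A)
  apply_eq_add : ∀ A A' x, g A' x = g A x + (A' - A)
  risesThenFalls : ∀ A, RisesThenFalls (g A) p₁ p₂
  lt : A₀ < A₁
  crossing : ∀ A ∈ Ioc A₀ A₁,
    p₁ < U A ∧ U A < p₂ ∧ p₂ < u A ∧ g A (U A) = ℓ ∧ g A (u A) = ℓ

namespace LevelCrossings

variable {g : ℝ → ℝ → ℝ} {p₁ p₂ ℓ A₀ A₁ A A' L : ℝ} {U u : ℝ → ℝ}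
  (hg : LevelCrossings g p₁ p₂ ℓ A₀ A₁ U u)
include hg

theorem le_apply_iff (hA : A ∈ Ioc A₀ A₁) {x : ℝ} (hx : p₁ ≤ x) :
    ℓ ≤ g A x ↔ x ∈ Icc (U A) (u A) := by
  obtain ⟨hU₁, hU₂, hu, hgU, hgu⟩ := hg.crossing A hA
  exact (hg.risesThenFalls A).le_apply_iff ⟨hU₁.le, hU₂.le⟩ hu.le hgU hgu hx

theorem integral_sub_le (hA : A ∈ Ioc A₀ A₁) {U' u' : ℝ} (hU' : p₁ ≤ U') (hU'u' : U' ≤ u')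
    (hℓ : ∀ x ∈ Icc U' u', ℓ ≤ g A x) :
    ∫ x in U'..u', (g A x - ℓ) ≤ ∫ x in U A..u A, (g A x - ℓ) := by
  obtain ⟨hU₁, hU₂, hu, hgU, hgu⟩ := hg.crossing A hA
  exact (hg.risesThenFalls A).integral_sub_le (hg.continuous A) ⟨hU₁.le, hU₂.le⟩ hu.le hgU hgu
    hU' hU'u' hℓ

theorem Icc_subset_Icc (hA : A ∈ Ioc A₀ A₁) (hA' : A' ∈ Ioc A₀ A₁) (hAA' : A ≤ A') :
    Icc (U A) (u A) ⊆ Icc (U A') (u A') := by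
  intro x hx
  have hx₁ : p₁ ≤ x := (hg.crossing A hA).1.le.trans hx.1
  rw [← hg.le_apply_iff hA' hx₁, hg.apply_eq_add A A']
  linarith [(hg.le_apply_iff hA hx₁).2 hx]

theorem integral_strictMonoOn :
    StrictMonoOn (fun A => ∫ x in U A..u A, (g A x - ℓ)) (Ioc A₀ A₁) := by
  intro A hA A' hA' hAA'
  obtain ⟨hU₁, hU₂, hu, -, -⟩ := hg.crossing A hA
  have hshift : ∫ x in U A..u A, (g A' x - ℓ)
      = (∫ x in U A..u A, (g A x - ℓ)) + (A' - A) * (u A - U A) := by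
    simp only [hg.apply_eq_add A A', add_sub_right_comm]
    rw [intervalIntegral.integral_add (f := fun x => g A x - ℓ)
        (((hg.continuous A).sub continuous_const).intervalIntegrable _ _) intervalIntegrable_const,
      intervalIntegral.integral_const, smul_eq_mul, mul_comm]
  have hpos : 0 < (A' - A) * (u A - U A) := mul_pos (by linarith) (by linarith)
  have hle := hg.integral_sub_le hA' hU₁.le (hU₂.trans hu).le fun x hx =>
    (hg.le_apply_iff hA' (hU₁.le.trans hx.1)).2 (hg.Icc_subset_Icc hA hA' hAA'.le hx)
  dsimp only
  linarith

theorem integral_eq_integral_max_zero (hA : A ∈ Ioc A₀ A₁) :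
    ∫ x in U A..u A, (g A x - ℓ) = ∫ x in U A₁..u A₁, max (g A x - ℓ) 0 := by
  have hA₁ : A₁ ∈ Ioc A₀ A₁ := ⟨hg.lt, le_rfl⟩
  obtain ⟨hU₁, hU₂, hu, hgU, hgu⟩ := hg.crossing A hA
  have hsub := hg.Icc_subset_Icc hA hA₁ hA.2
  have hc : p₁ ≤ U A₁ := (hg.crossing A₁ hA₁).1.le
  have hmono := (hg.risesThenFalls A).strictMonoOn.monotoneOn
  have hanti := (hg.risesThenFalls A).strictAntiOn.antitoneOn
  refine intervalIntegral.integral_eq_integral_max_zero ((hg.continuous A).sub continuous_const)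
    (hsub ⟨le_rfl, (hU₂.trans hu).le⟩).1 (hU₂.trans hu).le (hsub ⟨(hU₂.trans hu).le, le_rfl⟩).2
    (fun x hx => ?_) (fun x hx => ?_) (fun x hx => ?_)
  · have := hmono ⟨hc.trans hx.1, hx.2.trans hU₂.le⟩ ⟨hU₁.le, hU₂.le⟩ hx.2
    linarith
  · exact sub_nonneg.2 ((hg.le_apply_iff hA (hU₁.le.trans hx.1)).2 hx)
  · have := hanti (show u A ∈ Ici p₂ from hu.le) (show x ∈ Ici p₂ from hu.le.trans hx.1) hx.1
    linarith

theorem integral_le_integral {g' : ℝ → ℝ → ℝ} {p₁' p₂' A₀' A₁' : ℝ} {U' u' : ℝ → ℝ}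
    (hg' : LevelCrossings g' p₁' p₂' ℓ A₀' A₁' U' u') (hA : A ∈ Ioc A₀ A₁) (hA' : A' ∈ Ioc A₀' A₁')
    (hp : p₁ ≤ p₁') (hle : ∀ x, p₁' ≤ x → g' A' x ≤ g A x) :
    ∫ x in U' A'..u' A', (g' A' x - ℓ) ≤ ∫ x in U A..u A, (g A x - ℓ) := by
  obtain ⟨hU₁, hU₂, hu, -, -⟩ := hg'.crossing A' hA'
  have hUu : U' A' ≤ u' A' := (hU₂.trans hu).le
  calc ∫ x in U' A'..u' A', (g' A' x - ℓ) ≤ ∫ x in U' A'..u' A', (g A x - ℓ) :=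
        intervalIntegral.integral_mono_on hUu
          (((hg'.continuous A').sub continuous_const).intervalIntegrable _ _)
          (((hg.continuous A).sub continuous_const).intervalIntegrable _ _)
          fun x hx => sub_le_sub_right (hle x (hU₁.le.trans hx.1)) ℓ
    _ ≤ ∫ x in U A..u A, (g A x - ℓ) :=
        hg.integral_sub_le hA (hp.trans hU₁.le) hUu fun x hx =>
          ((hg'.le_apply_iff hA' (hU₁.le.trans hx.1)).2 hx).trans (hle x (hU₁.le.trans hx.1))

theorem existsUnique_integral_eq (hpeak : g A₀ p₂ ≤ ℓ) (hL : 0 < L)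
    (hL₁ : L ≤ ∫ x in U A₁..u A₁, (g A₁ x - ℓ)) :
    ∃! A, A ∈ Ioc A₀ A₁ ∧ ∫ x in U A..u A, (g A x - ℓ) = L := by
  have hA₁ : A₁ ∈ Ioc A₀ A₁ := ⟨hg.lt, le_rfl⟩
  -- `Ψ` is the area on `(A₀, A₁]`, written over a fixed interval so that it is visibly continuous.
  set Ψ : ℝ → ℝ := fun A => ∫ x in U A₁..u A₁, max (g A x - ℓ) 0
  have hΨ : Continuous Ψ := by
    refine intervalIntegral.continuous_parametric_intervalIntegral_of_continuous' ?_ _ _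
    have hcont := hg.continuous A₁
    simp only [Function.uncurry_def]
    conv => enter [1, p]; rw [hg.apply_eq_add A₁]
    fun_prop
  have hΨ₀ : Ψ A₀ = 0 := by
    obtain ⟨hU₁, hU₂, hu, -, -⟩ := hg.crossing A₁ hA₁
    refine (intervalIntegral.integral_congr fun x hx => max_eq_right ?_).trans
      intervalIntegral.integral_zero
    rw [uIcc_of_le (hU₂.trans hu).le] at hx
    linarith [(hg.risesThenFalls A₀).apply_le_apply_right (hU₁.le.trans hx.1)]
  obtain ⟨A, hA, hΨA⟩ := intermediate_value_Icc hg.lt.le hΨ.continuousOn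
    ⟨hΨ₀ ▸ hL.le, hL₁.trans_eq (hg.integral_eq_integral_max_zero hA₁)⟩
  have hA' : A ∈ Ioc A₀ A₁ :=
    ⟨hA.1.lt_of_ne (by rintro rfl; exact hL.ne' (hΨA.symm.trans hΨ₀)), hA.2⟩
  have hΛA : ∫ x in U A..u A, (g A x - ℓ) = L := (hg.integral_eq_integral_max_zero hA').trans hΨA
  exact ⟨A, ⟨hA', hΛA⟩, fun A' ⟨hA'', hΛA'⟩ =>
    hg.integral_strictMonoOn.injOn hA'' hA' (hΛA'.trans hΛA.symm)⟩

end LevelCrossings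

structure IsHoldingCost (a : ℝ) (h : ℝ → ℝ) : Prop where
  convexOn : ConvexOn ℝ univ h
  continuous : Continuous h
  nonneg : ∀ x, 0 ≤ h x
  apply_center : h a = 0
  contDiffAt : ∀ x, x ≠ a → ContDiffAt ℝ 2 h x
  deriv_neg : ∀ x, x < a → deriv h x < 0
  deriv_pos : ∀ x, a < x → 0 < deriv h x

namespace IsHoldingCost

variable {a : ℝ} {h : ℝ → ℝ} (hh : IsHoldingCost a h)
include hh

theorem hasDerivAt {x : ℝ} (hx : x ≠ a) : HasDerivAt h (deriv h x) x :=
  ((hh.contDiffAt x hx).differentiableAt two_ne_zero).hasDerivAt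

-- Also when `h` has a kink at `a`: `deriv` then returns the junk value `0`.
theorem deriv_center : deriv h a = 0 :=
  IsLocalMin.deriv_eq_zero (Eventually.of_forall fun x => hh.apply_center ▸ hh.nonneg x)

theorem deriv_nonneg {x : ℝ} (hx : a ≤ x) : 0 ≤ deriv h x := by
  rcases hx.eq_or_lt with rfl | hx
  · exact hh.deriv_center.ge
  · exact (hh.deriv_pos x hx).le

theorem monotone_deriv : Monotone (deriv h) := by
  have hdiff : ∀ s ⊆ ({a}ᶜ : Set ℝ), ∀ x ∈ s, DifferentiableAt ℝ h x :=
    fun s hs x hx => (hh.hasDerivAt (hs hx)).differentiableAt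
  have hleft := (hh.convexOn.subset (subset_univ _) (convex_Iio a)).monotoneOn_deriv
    (hdiff _ fun x hx => hx.ne)
  have hright := (hh.convexOn.subset (subset_univ _) (convex_Ioi a)).monotoneOn_deriv
    (hdiff _ fun x hx => hx.ne')
  intro x y hxy
  rcases lt_or_ge x a with hx | hx
  · rcases lt_or_ge y a with hy | hy
    · exact hleft hx hy hxy
    · exact (hh.deriv_neg x hx).le.trans (hh.deriv_nonneg hy)
  · rcases hx.eq_or_lt with rfl | hx
    · exact hh.deriv_center.le.trans (hh.deriv_nonneg hxy)
    · exact hright hx (hx.trans_le hxy) hxy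

theorem intervalIntegrable_deriv_mul_exp (c x y : ℝ) :
    IntervalIntegrable (fun t => deriv h t * exp (c * (t - a))) volume x y :=
  hh.monotone_deriv.intervalIntegrable.mul_continuousOn (by fun_prop)

theorem integral_deriv_mul_exp (c x : ℝ) :
    ∫ t in a..x, deriv h t * exp (c * (t - a))
      = h x * exp (c * (x - a)) - c * ∫ t in a..x, h t * exp (c * (t - a)) := by
  have hexp : ∀ t, HasDerivAt (fun t => exp (c * (t - a))) (c * exp (c * (t - a))) t := fun t => by
    simpa [mul_comm] using (((hasDerivAt_id t).sub_const a).const_mul c).exp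
  have hne : ∀ t ∈ Ioo (min a x) (max a x), t ≠ a := by
    rintro t ⟨h₁, h₂⟩ rfl
    simp only [min_lt_iff, lt_max_iff, lt_irrefl, false_or] at h₁ h₂
    exact lt_asymm h₁ h₂
  have hparts := intervalIntegral.integral_mul_deriv_eq_deriv_mul_of_hasDeriv_right
    hh.continuous.continuousOn (by fun_prop)
    (fun t ht => (hh.hasDerivAt (hne t ht)).hasDerivWithinAt)
    (fun t _ => (hexp t).hasDerivWithinAt) hh.monotone_deriv.intervalIntegrable
    ((continuous_const.mul (by fun_prop)).intervalIntegrable _ _)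
  have hconst : ∫ t in a..x, h t * (c * exp (c * (t - a)))
      = c * ∫ t in a..x, h t * exp (c * (t - a)) := by
    rw [← intervalIntegral.integral_const_mul]
    exact intervalIntegral.integral_congr fun t _ => by ring
  rw [hh.apply_center, zero_mul, sub_zero, hconst] at hparts
  linarith

end IsHoldingCost

variable {μ σ a : ℝ} {h : ℝ → ℝ}

theorem gfun_sub_gfun (A A' B B' x : ℝ) :
    gfun μ σ a h A' B' x - gfun μ σ a h A B x
      = A' - A - (B' - B) * exp (-(2 * μ / σ ^ 2) * (x - a)) := by
  simp only [gfun]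
  ring

theorem gfun_eq (A B x : ℝ) :
    gfun μ σ a h A B x = A - exp (-(2 * μ / σ ^ 2) * (x - a)) *
      (B + 2 * μ / σ ^ 2 / μ * ∫ y in a..x, h y * exp (2 * μ / σ ^ 2 * (y - a))) := by
  have hfactor : ∫ y in a..x, h y * exp (-(2 * μ / σ ^ 2) * (x - y))
      = exp (-(2 * μ / σ ^ 2) * (x - a)) * ∫ y in a..x, h y * exp (2 * μ / σ ^ 2 * (y - a)) := by
    rw [← intervalIntegral.integral_const_mul]
    refine intervalIntegral.integral_congr fun y _ => ?_
    rw [mul_left_comm, ← exp_add]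
    ring_nf
  rw [gfun, hfactor]
  ring

section

variable (hh : IsHoldingCost a h)
include hh

theorem F1_sub_F1 (B x y : ℝ) :
    F1 μ σ a h B y - F1 μ σ a h B x
      = -(1 / μ) * ∫ t in x..y, deriv h t * exp (2 * μ / σ ^ 2 * (t - a)) := by
  have hi := hh.intervalIntegrable_deriv_mul_exp (2 * μ / σ ^ 2)
  rw [← intervalIntegral.integral_interval_sub_left (hi a y) (hi a x)]
  simp only [F1]
  ring

theorem F1_strictMonoOn (hμ : 0 < μ) (B : ℝ) : StrictMonoOn (F1 μ σ a h B) (Iic a) := by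
  intro x _ y hy hxy
  have hpos : 0 < ∫ t in x..y, -(deriv h t * exp (2 * μ / σ ^ 2 * (t - a))) :=
    intervalIntegral.intervalIntegral_pos_of_pos_on
      (hh.intervalIntegrable_deriv_mul_exp _ x y).neg (fun t ht => neg_pos.2
        (mul_neg_of_neg_of_pos (hh.deriv_neg t (ht.2.trans_le hy)) (exp_pos _))) hxy
  rw [intervalIntegral.integral_neg] at hpos
  have hdiff := F1_sub_F1 (μ := μ) (σ := σ) hh B x y
  have hμ' : 0 < 1 / μ := by positivity
  nlinarith

theorem F1_strictAntiOn (hμ : 0 < μ) (B : ℝ) : StrictAntiOn (F1 μ σ a h B) (Ici a) := by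
  intro x hx y _ hxy
  have hpos : 0 < ∫ t in x..y, deriv h t * exp (2 * μ / σ ^ 2 * (t - a)) :=
    intervalIntegral.intervalIntegral_pos_of_pos_on (hh.intervalIntegrable_deriv_mul_exp _ x y)
      (fun t ht => mul_pos (hh.deriv_pos t (hx.trans_lt ht.1)) (exp_pos _)) hxy
  have hdiff := F1_sub_F1 (μ := μ) (σ := σ) hh B x y
  have hμ' : 0 < 1 / μ := by positivity
  nlinarith

theorem gfun_eq_sub_F1 (A B x : ℝ) :
    gfun μ σ a h A B x = A - h x / μ - exp (-(2 * μ / σ ^ 2) * (x - a)) * F1 μ σ a h B x := by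
  have hinv : exp (-(2 * μ / σ ^ 2) * (x - a)) * exp (2 * μ / σ ^ 2 * (x - a)) = 1 := by
    rw [← exp_add]; ring_nf; exact exp_zero
  rw [gfun_eq, F1, hh.integral_deriv_mul_exp]
  linear_combination (-(h x / μ)) * hinv

theorem gfun_of_F1_eq_zero {A B x : ℝ} (hF : F1 μ σ a h B x = 0) :
    gfun μ σ a h A B x = A - h x / μ := by
  rw [gfun_eq_sub_F1 hh, hF, mul_zero, sub_zero]

theorem hasDerivAt_gfun (A B x : ℝ) :
    HasDerivAt (gfun μ σ a h A B)
      (2 * μ / σ ^ 2 * exp (-(2 * μ / σ ^ 2) * (x - a)) * F1 μ σ a h B x) x := by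
  have hc : Continuous fun y => h y * exp (2 * μ / σ ^ 2 * (y - a)) :=
    hh.continuous.mul (by fun_prop)
  have hK : HasDerivAt (fun x => ∫ y in a..x, h y * exp (2 * μ / σ ^ 2 * (y - a)))
      (h x * exp (2 * μ / σ ^ 2 * (x - a))) x :=
    intervalIntegral.integral_hasDerivAt_right (hc.intervalIntegrable _ _)
      hc.aestronglyMeasurable.stronglyMeasurableAtFilter hc.continuousAt
  have hexp : HasDerivAt (fun x => exp (-(2 * μ / σ ^ 2) * (x - a)))
      (-(2 * μ / σ ^ 2) * exp (-(2 * μ / σ ^ 2) * (x - a))) x := by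
    simpa [mul_comm] using (((hasDerivAt_id x).sub_const a).const_mul (-(2 * μ / σ ^ 2))).exp
  rw [show gfun μ σ a h A B = _ from funext (gfun_eq A B)]
  refine ((hexp.mul ((hK.const_mul _).const_add B)).const_sub A).congr_deriv ?_
  rw [F1, hh.integral_deriv_mul_exp]
  ring

theorem continuous_gfun (A B : ℝ) : Continuous (gfun μ σ a h A B) :=
  continuous_iff_continuousAt.2 fun x => (hasDerivAt_gfun hh A B x).continuousAt

theorem strictMonoOn_gfun (hμ : 0 < μ) (hσ : 0 < σ) {B : ℝ} {s : Set ℝ} (hs : Convex ℝ s)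
    (hF : ∀ x ∈ interior s, 0 < F1 μ σ a h B x) (A : ℝ) : StrictMonoOn (gfun μ σ a h A B) s :=
  strictMonoOn_of_deriv_pos hs (continuous_gfun hh A B).continuousOn fun x hx => by
    rw [(hasDerivAt_gfun hh A B x).deriv]
    exact mul_pos (by positivity) (hF x hx)

theorem strictAntiOn_gfun (hμ : 0 < μ) (hσ : 0 < σ) {B : ℝ} {s : Set ℝ} (hs : Convex ℝ s)
    (hF : ∀ x ∈ interior s, F1 μ σ a h B x < 0) (A : ℝ) : StrictAntiOn (gfun μ σ a h A B) s :=
  strictAntiOn_of_deriv_neg hs (continuous_gfun hh A B).continuousOn fun x hx => by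
    rw [(hasDerivAt_gfun hh A B x).deriv]
    exact mul_neg_of_pos_of_neg (by positivity) (hF x hx)

end

structure IsCriticalPair (μ σ a : ℝ) (h : ℝ → ℝ) (B p₁ p₂ : ℝ) : Prop where
  left_lt : p₁ < a
  F1_left : F1 μ σ a h B p₁ = 0
  lt_right : a < p₂
  F1_right : F1 μ σ a h B p₂ = 0

namespace IsCriticalPair

variable {μ σ a : ℝ} {h : ℝ → ℝ} {B B' p₁ p₂ q₁ q₂ : ℝ}
  (hh : IsHoldingCost a h) (hμ : 0 < μ) (hσ : 0 < σ) (hp : IsCriticalPair μ σ a h B p₁ p₂)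
include hh hμ hσ hp

theorem risesThenFalls (A : ℝ) : RisesThenFalls (gfun μ σ a h A B) p₁ p₂ := by
  refine ⟨strictMonoOn_gfun hh hμ hσ (convex_Icc p₁ p₂) (fun x hx => ?_) A,
    strictAntiOn_gfun hh hμ hσ (convex_Ici p₂) (fun x hx => ?_) A⟩
  · rw [interior_Icc] at hx
    rcases le_total x a with hxa | hxa
    · exact hp.F1_left ▸ F1_strictMonoOn hh hμ B hp.left_lt.le hxa hx.1
    · exact hp.F1_right ▸ F1_strictAntiOn hh hμ B hxa hp.lt_right.le hx.2
  · rw [interior_Ici] at hx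
    exact hp.F1_right ▸ F1_strictAntiOn hh hμ B hp.lt_right.le (hp.lt_right.trans hx).le hx

theorem gfun_left_le (A : ℝ) {x : ℝ} (hx : x ≤ p₂) :
    gfun μ σ a h A B p₁ ≤ gfun μ σ a h A B x := by
  rcases le_total x p₁ with hxp | hxp
  · refine (strictAntiOn_gfun hh hμ hσ (convex_Iic p₁) (fun y hy => ?_) A).antitoneOn
      hxp (le_refl p₁) hxp
    rw [interior_Iic] at hy
    exact hp.F1_left ▸ F1_strictMonoOn hh hμ B (hy.trans hp.left_lt).le hp.left_lt.le hy
  · exact (hp.risesThenFalls hh hμ hσ A).strictMonoOn.monotoneOn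
      ⟨le_rfl, (hp.left_lt.trans hp.lt_right).le⟩ ⟨hxp, hx⟩ hxp

omit hσ in
theorem left_le_left (hq : IsCriticalPair μ σ a h B' q₁ q₂) (hBB' : B ≤ B') : q₁ ≤ p₁ := by
  have hshift : F1 μ σ a h B' p₁ = F1 μ σ a h B p₁ + (B' - B) := by simp only [F1]; ring
  refine ((F1_strictMonoOn (σ := σ) hh hμ B').le_iff_le hq.left_lt.le hp.left_lt.le).1 ?_
  rw [hshift, hp.F1_left, hq.F1_left]
  linarith

-- Envelope argument: `q₂` maximises and `q₁` minimises `gfun 0 B'` on ranges containing `p₂`, `p₁`.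
theorem gfun_right_sub_left_lt (hq : IsCriticalPair μ σ a h B' q₁ q₂) (hBB' : B < B') :
    gfun μ σ a h 0 B p₂ - gfun μ σ a h 0 B p₁ < gfun μ σ a h 0 B' q₂ - gfun μ σ a h 0 B' q₁ := by
  have hpeak := (hq.risesThenFalls hh hμ hσ 0).apply_le_apply_right
    (hq.left_lt.trans hp.lt_right).le
  have hvalley := hq.gfun_left_le hh hμ hσ 0 (hp.left_lt.trans hq.lt_right).le
  have hexp : exp (-(2 * μ / σ ^ 2) * (p₂ - a)) < exp (-(2 * μ / σ ^ 2) * (p₁ - a)) := by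
    have : 0 < 2 * μ / σ ^ 2 := by positivity
    exact exp_lt_exp.2 (by nlinarith [hp.left_lt, hp.lt_right])
  have h₂ := gfun_sub_gfun (μ := μ) (σ := σ) (a := a) (h := h) 0 0 B B' p₂
  have h₁ := gfun_sub_gfun (μ := μ) (σ := σ) (a := a) (h := h) 0 0 B B' p₁
  nlinarith [mul_lt_mul_of_pos_left hexp (sub_pos.2 hBB')]

theorem gfun_le_gfun (hq : IsCriticalPair μ σ a h B' q₁ q₂) (hBB' : B ≤ B') (k : ℝ) {x : ℝ}
    (hx : p₁ ≤ x) : gfun μ σ a h (h p₁ / μ - k) B x ≤ gfun μ σ a h (h q₁ / μ - k) B' x := by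
  have hvalley := hq.gfun_left_le hh hμ hσ 0 (hp.left_lt.trans hq.lt_right).le
  rw [gfun_of_F1_eq_zero hh hq.F1_left] at hvalley
  have hshift := gfun_sub_gfun (μ := μ) (σ := σ) (a := a) (h := h) 0 0 B B' p₁
  rw [gfun_of_F1_eq_zero hh hp.F1_left] at hshift
  have hexp : exp (-(2 * μ / σ ^ 2) * (x - a)) ≤ exp (-(2 * μ / σ ^ 2) * (p₁ - a)) := by
    have : 0 < 2 * μ / σ ^ 2 := by positivity
    exact exp_le_exp.2 (by nlinarith)
  have hgoal := gfun_sub_gfun (μ := μ) (σ := σ) (a := a) (h := h)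
    (h p₁ / μ - k) (h q₁ / μ - k) B B' x
  nlinarith [mul_le_mul_of_nonneg_left hexp (sub_nonneg.2 hBB')]

end IsCriticalPair

theorem stmt13_general (μ σ a : ℝ) (h : ℝ → ℝ)
    (hμ : 0 < μ) (hσ : 0 < σ)
    (hconv : ConvexOn ℝ Set.univ h)
    (hcont : Continuous h)
    (hnonneg : ∀ x, 0 ≤ h x)
    (ha : h a = 0)
    (hC2 : ∀ x : ℝ, x ≠ a → ContDiffAt ℝ 2 h x)
    (hneg : ∀ x, x < a → deriv h x < 0)
    (hpos : ∀ x, a < x → 0 < deriv h x)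
    (x1 x2 : ℝ → ℝ)
    (hx1 : ∀ B ∈ Set.Ioo 0 (Bbar μ σ a h), x1 B < a ∧ F1 μ σ a h B (x1 B) = 0)
    (hx2 : ∀ B : ℝ, 0 < B → a < x2 B ∧ F1 μ σ a h B (x2 B) = 0)
    (k ℓ : ℝ) (B₁ : ℝ)
    (hB₁ : B₁ ∈ Set.Ioo 0 (Bbar μ σ a h) ∧
      gfun μ σ a h 0 B₁ (x2 B₁) - gfun μ σ a h 0 B₁ (x1 B₁) = k + ℓ)
    (Ufun ufun : ℝ → ℝ → ℝ)
    (hUu : ∀ B ∈ Set.Ioo B₁ (Bbar μ σ a h),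
      ∀ A ∈ Set.Ioc (h (x2 B) / μ + ℓ) (h (x1 B) / μ - k),
        x1 B < Ufun A B ∧ Ufun A B < x2 B ∧ x2 B < ufun A B ∧
        gfun μ σ a h A B (Ufun A B) = ℓ ∧ gfun μ σ a h A B (ufun A B) = ℓ ∧
        0 < deriv (gfun μ σ a h A B) (Ufun A B) ∧ deriv (gfun μ σ a h A B) (ufun A B) < 0)
    (L : ℝ) (hL : 0 < L) (B₂ : ℝ)
    (hB₂ : B₂ ∈ Set.Ioo B₁ (Bbar μ σ a h) ∧
      (∫ x in Ufun (h (x1 B₂) / μ - k) B₂..ufun (h (x1 B₂) / μ - k) B₂,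
        (gfun μ σ a h (h (x1 B₂) / μ - k) B₂ x - ℓ)) = L)
    :
    ∀ B ∈ Set.Ico B₂ (Bbar μ σ a h),
      ∃! A : ℝ, A ∈ Set.Ioc (h (x2 B) / μ + ℓ) (h (x1 B) / μ - k) ∧
        (∫ x in Ufun A B..ufun A B, (gfun μ σ a h A B x - ℓ)) = L := by
  have hh : IsHoldingCost a h := ⟨hconv, hcont, hnonneg, ha, hC2, hneg, hpos⟩
  have crit : ∀ B ∈ Ioo 0 (Bbar μ σ a h), IsCriticalPair μ σ a h B (x1 B) (x2 B) :=
    fun B hB => ⟨(hx1 B hB).1, (hx1 B hB).2, (hx2 B hB.1).1, (hx2 B hB.1).2⟩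
  have crit' : ∀ B ∈ Ioo B₁ (Bbar μ σ a h), IsCriticalPair μ σ a h B (x1 B) (x2 B) :=
    fun B hB => crit B ⟨hB₁.1.1.trans hB.1, hB.2⟩
  have gap : ∀ B ∈ Ioo B₁ (Bbar μ σ a h), h (x2 B) / μ + ℓ < h (x1 B) / μ - k := fun B hB => by
    have hosc := (crit B₁ hB₁.1).gfun_right_sub_left_lt hh hμ hσ (crit' B hB) hB.1
    rw [hB₁.2, gfun_of_F1_eq_zero hh (crit' B hB).F1_left,
      gfun_of_F1_eq_zero hh (crit' B hB).F1_right] at hosc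
    linarith
  have levels : ∀ B ∈ Ioo B₁ (Bbar μ σ a h), LevelCrossings (fun A => gfun μ σ a h A B)
      (x1 B) (x2 B) ℓ (h (x2 B) / μ + ℓ) (h (x1 B) / μ - k) (Ufun · B) (ufun · B) :=
    fun B hB =>
    { continuous := fun A => continuous_gfun hh A B
      apply_eq_add := fun A A' x => by simp only [gfun]; ring
      risesThenFalls := (crit' B hB).risesThenFalls hh hμ hσ
      lt := gap B hB
      crossing := fun A hA =>
        let ⟨hU₁, hU₂, hu, hgU, hgu, _⟩ := hUu B hB A hA
        ⟨hU₁, hU₂, hu, hgU, hgu⟩ }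
  intro B hB
  have hB' : B ∈ Ioo B₁ (Bbar μ σ a h) := ⟨hB₂.1.1.trans_le hB.1, hB.2⟩
  have hgrow := (levels B hB').integral_le_integral (levels B₂ hB₂.1) ⟨gap B hB', le_rfl⟩
    ⟨gap B₂ hB₂.1, le_rfl⟩ ((crit' B₂ hB₂.1).left_le_left hh hμ (crit' B hB') hB.1)
    fun x hx => (crit' B₂ hB₂.1).gfun_le_gfun hh hμ hσ (crit' B hB') hB.1 k hx
  refine (levels B hB').existsUnique_integral_eq ?_ hL (hB₂.2 ▸ hgrow)
  rw [gfun_of_F1_eq_zero hh (crit' B hB').F1_right]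
  linarith

theorem stmt13 (μ σ a : ℝ) (h : ℝ → ℝ)
    (hμ : 0 < μ) (hσ : 0 < σ)
    (hconv : ConvexOn ℝ Set.univ h)
    (hcont : Continuous h)
    (hnonneg : ∀ x, 0 ≤ h x)
    (ha : h a = 0)
    (hC2 : ∀ x : ℝ, x ≠ a → ContDiffAt ℝ 2 h x)
    (hneg : ∀ x, x < a → deriv h x < 0)
    (hpos : ∀ x, a < x → 0 < deriv h x)
    (hint : IntegrableOn (fun y => |deriv h y| * Real.exp ((2 * μ / σ ^ 2) * (y - a))) (Set.Iic a))
    (x1 x2 : ℝ → ℝ)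
    (hx1 : ∀ B ∈ Set.Ioo 0 (Bbar μ σ a h), x1 B < a ∧ F1 μ σ a h B (x1 B) = 0)
    (hx2 : ∀ B : ℝ, 0 < B → a < x2 B ∧ F1 μ σ a h B (x2 B) = 0)
    (k ℓ : ℝ) (hk : 0 < k) (hl : 0 < ℓ) (B₁ : ℝ)
    (hB₁ : B₁ ∈ Set.Ioo 0 (Bbar μ σ a h) ∧
      gfun μ σ a h 0 B₁ (x2 B₁) - gfun μ σ a h 0 B₁ (x1 B₁) = k + ℓ)
    (Ufun ufun : ℝ → ℝ → ℝ)
    (hUu : ∀ B ∈ Set.Ioo B₁ (Bbar μ σ a h),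
      ∀ A ∈ Set.Ioc (h (x2 B) / μ + ℓ) (h (x1 B) / μ - k),
        x1 B < Ufun A B ∧ Ufun A B < x2 B ∧ x2 B < ufun A B ∧
        gfun μ σ a h A B (Ufun A B) = ℓ ∧ gfun μ σ a h A B (ufun A B) = ℓ ∧
        0 < deriv (gfun μ σ a h A B) (Ufun A B) ∧ deriv (gfun μ σ a h A B) (ufun A B) < 0)
    (L : ℝ) (hL : 0 < L) (B₂ : ℝ)
    (hB₂ : B₂ ∈ Set.Ioo B₁ (Bbar μ σ a h) ∧
      (∫ x in Ufun (h (x1 B₂) / μ - k) B₂..ufun (h (x1 B₂) / μ - k) B₂,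
        (gfun μ σ a h (h (x1 B₂) / μ - k) B₂ x - ℓ)) = L)
    :
    ∀ B ∈ Set.Ico B₂ (Bbar μ σ a h),
      ∃! A : ℝ, A ∈ Set.Ioc (h (x2 B) / μ + ℓ) (h (x1 B) / μ - k) ∧
        (∫ x in Ufun A B..ufun A B, (gfun μ σ a h A B x - ℓ)) = L :=
  stmt13_general μ σ a h hμ hσ hconv hcont hnonneg ha hC2 hneg hpos x1 x2 hx1 hx2 k ℓ B₁ hB₁ Ufun
    ufun hUu L hL B₂ hB₂
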